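/- There exists c > 0 such that the following holds: for every n ∈ ℕ, every natural number p with 0 ≤ p ≤ 10^n, and every integer L > n, setting t = p/10^n we have |μ̂_t(10^L)| ≥ c · (1/3)^n. -/

import Mathlib

open MeasureTheory Filter Set
open scoped ENNReal NNReal

/-- The Fourier transform of a measure on `ℝ`: `μ̂(ξ) = ∫ e^{2πiξx} dμ(x)`. -/
noncomputable def ft (μ : Measure ℝ) (ξ : ℝ) : ℂ :=
  ∫ x, Complex.exp (((2 * Real.pi * ξ * x : ℝ) : ℂ) * Complex.I) ∂μ

/-- `μ_t` is invariant for the IFS `{x/10, (x+1)/10, (x+t)/10}` with weights `(1/3,1/3,1/3)`. -/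
def muInv (t : ℝ) (μ : Measure ℝ) : Prop :=
  μ = (3 : ℝ≥0∞)⁻¹ • (Measure.map (fun x : ℝ => x / 10) μ +
    Measure.map (fun x : ℝ => (x + 1) / 10) μ + Measure.map (fun x : ℝ => (x + t) / 10) μ)

/-! Write `𝐞 x = exp (2πix)`. Self-similarity gives `μ̂(ξ) = (1 + 𝐞(ξ/10) + 𝐞(tξ/10)) μ̂(ξ/10) / 3`.
At `ξ = 10^(k+1)` the middle term is `1`. Once `k ≥ n` the last one is `1` too, because `10^k t`
is an integer, so the factor is `1` and `μ̂(10^L) = μ̂(10^n)`; for `k < n` we only know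
`|2 + 𝐞(·)| ≥ 1`, so each step loses at most a factor `3` and `|μ̂(10^n)| ≥ 3^{-n} |μ̂(1)|`.
Finally `μ` is carried by `[0, 1/9]`: the mass outside the `r`-neighbourhood of `[0, 1/9]` is at
most the mass outside the `10r`-neighbourhood, which tends to `0`. Hence
`|μ̂(1)| ≥ Re μ̂(1) ≥ cos (2π/9) > 0`. -/

open Real FourierTransform Topology

lemma Real.fourierChar_intCast (n : ℤ) : 𝐞 (n : ℝ) = 1 := by
  rw [fourierChar_apply', Circle.exp_two_pi_mul_int]

lemma ft_eq_integral_fourierChar (μ : Measure ℝ) (ξ : ℝ) :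
    ft μ ξ = ∫ x, (𝐞 (ξ * x) : ℂ) ∂μ := by
  simp only [ft, fourierChar_apply, mul_assoc]

lemma cos_le_norm_ft_one {μ : Measure ℝ} [IsProbabilityMeasure μ] {b : ℝ} (hb : b ≤ 1 / 2)
    (hμ : ∀ᵐ x ∂μ, x ∈ Icc 0 b) : cos (2 * π * b) ≤ ‖ft μ 1‖ := by
  have hexp : Integrable (fun x : ℝ => Complex.exp (((2 * π * 1 * x : ℝ) : ℂ) * Complex.I)) μ :=
    .of_bound (by fun_prop) 1 (.of_forall fun x => (Complex.norm_exp_ofReal_mul_I _).le)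
  have hcos : Integrable (fun x : ℝ => cos (2 * π * 1 * x)) μ :=
    .of_bound (by fun_prop) 1 (.of_forall fun x => (norm_eq_abs _).trans_le (abs_cos_le_one _))
  have hre : (ft μ 1).re = ∫ x, cos (2 * π * 1 * x) ∂μ := by
    simp only [ft, ← Complex.exp_ofReal_mul_I_re]
    exact (integral_re hexp).symm
  calc cos (2 * π * b) = ∫ _, cos (2 * π * b) ∂μ := by simp
    _ ≤ ∫ x, cos (2 * π * 1 * x) ∂μ := by
      refine integral_mono_ae (integrable_const _) hcos (hμ.mono fun x hx => ?_)
      rw [mul_one]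
      exact cos_le_cos_of_nonneg_of_le_pi (by nlinarith [pi_pos, hx.1]) (by nlinarith [pi_pos])
        (by nlinarith [pi_pos, hx.2])
    _ = (ft μ 1).re := hre.symm
    _ ≤ ‖ft μ 1‖ := Complex.re_le_norm _

lemma tendsto_measure_compl_Icc_atTop (μ : Measure ℝ) [IsFiniteMeasure μ] (b : ℝ) :
    Tendsto (fun R => μ (Icc (-R) (b + R))ᶜ) atTop (𝓝 0) := by
  have hanti : Antitone fun R : ℝ => (Icc (-R) (b + R))ᶜ := fun R R' hR =>
    compl_subset_compl.mpr (Icc_subset_Icc (by linarith) (by linarith))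
  have hempty : ⋂ R : ℝ, (Icc (-R) (b + R))ᶜ = ∅ := by
    refine eq_empty_of_forall_notMem fun x hx => mem_iInter.mp hx (|x| + |b|) ?_
    exact ⟨by linarith [neg_abs_le x, abs_nonneg b], by linarith [le_abs_self x, neg_abs_le b]⟩
  have := tendsto_measure_iInter_atTop (μ := μ)
    (fun R => measurableSet_Icc.compl.nullMeasurableSet) hanti ⟨0, measure_ne_top μ _⟩
  rwa [hempty, measure_empty] at this

lemma preimage_compl_Icc_subset {a : ℝ} (ha0 : 0 ≤ a) (ha1 : a ≤ 1) (r : ℝ) :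
    (fun x => (x + a) / 10) ⁻¹' (Icc (-r) (1 / 9 + r))ᶜ ⊆
      (Icc (-(10 * r)) (1 / 9 + 10 * r))ᶜ :=
  fun _ hx hmem => hx ⟨by linarith [hmem.1], by linarith [hmem.2]⟩

namespace muInv

variable {t : ℝ} {μ : Measure ℝ}

lemma measure_eq (h : muInv t μ) {s : Set ℝ} (hs : MeasurableSet s) :
    μ s = 3⁻¹ * (μ ((· / 10) ⁻¹' s) + μ ((fun x => (x + 1) / 10) ⁻¹' s)
      + μ ((fun x => (x + t) / 10) ⁻¹' s)) := by
  conv_lhs => rw [h]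
  simp only [Measure.smul_apply, Measure.add_apply, smul_eq_mul]
  rw [Measure.map_apply (by fun_prop) hs, Measure.map_apply (by fun_prop) hs,
    Measure.map_apply (by fun_prop) hs]

lemma measure_le_of_preimage_subset (h : muInv t μ) {s u : Set ℝ} (hs : MeasurableSet s)
    (hsu : ∀ a ∈ ({0, 1, t} : Set ℝ), (fun x => (x + a) / 10) ⁻¹' s ⊆ u) : μ s ≤ μ u := by
  have h0 : μ ((· / 10) ⁻¹' s) ≤ μ u := measure_mono (by simpa using hsu 0 (by simp))
  have h1 := measure_mono (μ := μ) (hsu 1 (by simp))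
  have h2 := measure_mono (μ := μ) (hsu t (by simp))
  calc μ s ≤ 3⁻¹ * (μ u + μ u + μ u) := by rw [h.measure_eq hs]; gcongr
    _ = 3⁻¹ * 3 * μ u := by ring
    _ = μ u := by rw [ENNReal.inv_mul_cancel three_ne_zero ENNReal.ofNat_ne_top, one_mul]

lemma measure_compl_Icc_eq_zero [IsFiniteMeasure μ] (h : muInv t μ) (ht0 : 0 ≤ t) (ht1 : t ≤ 1)
    {r : ℝ} (hr : 0 < r) : μ (Icc (-r) (1 / 9 + r))ᶜ = 0 := by
  have hmono : ∀ m : ℕ,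
      μ (Icc (-r) (1 / 9 + r))ᶜ ≤ μ (Icc (-(10 ^ m * r)) (1 / 9 + 10 ^ m * r))ᶜ := by
    intro m
    induction m with
    | zero => simp
    | succ m ih =>
      refine ih.trans (h.measure_le_of_preimage_subset measurableSet_Icc.compl fun a ha => ?_)
      rw [pow_succ', mul_assoc]
      obtain rfl | rfl | rfl := ha <;>
        exact preimage_compl_Icc_subset (by linarith) (by linarith) _
  have hlim : Tendsto (fun m : ℕ => μ (Icc (-(10 ^ m * r)) (1 / 9 + 10 ^ m * r))ᶜ) atTop (𝓝 0) :=
    (tendsto_measure_compl_Icc_atTop μ _).comp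
      ((tendsto_pow_atTop_atTop_of_one_lt (by norm_num)).atTop_mul_const hr)
  exact le_antisymm (ge_of_tendsto' hlim hmono) bot_le

lemma ae_mem_Icc [IsFiniteMeasure μ] (h : muInv t μ) (ht0 : 0 ≤ t) (ht1 : t ≤ 1) :
    ∀ᵐ x ∂μ, x ∈ Icc (0 : ℝ) (1 / 9) := by
  rw [ae_iff]
  refine measure_mono_null (fun x hx => ?_) (measure_iUnion_null fun n : ℕ =>
    h.measure_compl_Icc_eq_zero ht0 ht1 (Nat.one_div_pos_of_nat (n := n)))
  simp only [mem_ofPred_eq, mem_Icc, not_and_or, not_le] at hx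
  rcases hx with hx | hx
  · obtain ⟨n, hn⟩ := exists_nat_one_div_lt (neg_pos.mpr hx)
    exact mem_iUnion.mpr ⟨n, fun hmem => by linarith [hmem.1]⟩
  · obtain ⟨n, hn⟩ := exists_nat_one_div_lt (sub_pos.mpr hx)
    exact mem_iUnion.mpr ⟨n, fun hmem => by linarith [hmem.2]⟩

lemma integral_eq [IsFiniteMeasure μ] (h : muInv t μ) {E : Type*} [NormedAddCommGroup E]
    [NormedSpace ℝ E] {f : ℝ → E} (hf : Continuous f) {C : ℝ} (hC : ∀ x, ‖f x‖ ≤ C) :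
    ∫ x, f x ∂μ = (3 : ℝ)⁻¹ • ((∫ x, f (x / 10) ∂μ) + (∫ x, f ((x + 1) / 10) ∂μ)
      + (∫ x, f ((x + t) / 10) ∂μ)) := by
  have hint : ∀ S : ℝ → ℝ, Integrable f (μ.map S) := fun S =>
    .of_bound hf.aestronglyMeasurable C (.of_forall hC)
  have hmap : ∀ S : ℝ → ℝ, Measurable S → ∫ x, f x ∂(μ.map S) = ∫ x, f (S x) ∂μ :=
    fun S hS => integral_map hS.aemeasurable hf.aestronglyMeasurable
  conv_lhs => rw [h]
  rw [integral_smul_measure, integral_add_measure ((hint _).add_measure (hint _)) (hint _),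
    integral_add_measure (hint _) (hint _), hmap _ (by fun_prop), hmap _ (by fun_prop),
    hmap _ (by fun_prop), ENNReal.toReal_inv, ENNReal.toReal_ofNat]

lemma ft_eq [IsFiniteMeasure μ] (h : muInv t μ) (ξ : ℝ) :
    ft μ ξ = 3⁻¹ * (1 + 𝐞 (ξ / 10) + 𝐞 (ξ * t / 10)) * ft μ (ξ / 10) := by
  have hshift : ∀ a x : ℝ,
      (𝐞 (ξ * ((x + a) / 10)) : ℂ) = 𝐞 (ξ * a / 10) * 𝐞 (ξ / 10 * x) := fun a x => by
    rw [← Circle.coe_mul, ← AddChar.map_add_eq_mul]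
    ring_nf
  have hzero : ∀ x : ℝ, (𝐞 (ξ * (x / 10)) : ℂ) = 𝐞 (ξ / 10 * x) := fun x => by ring_nf
  simp only [ft_eq_integral_fourierChar]
  rw [h.integral_eq (by fun_prop) (fun x => (Circle.norm_coe _).le)]
  simp only [hshift 1, hshift t, hzero, mul_one, integral_const_mul, Complex.real_smul]
  push_cast
  ring

lemma ft_ten_pow_succ [IsFiniteMeasure μ] (h : muInv t μ) (k : ℕ) :
    ft μ (10 ^ (k + 1)) = 3⁻¹ * (2 + 𝐞 (10 ^ k * t)) * ft μ (10 ^ k) := by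
  have hdiv : (10 : ℝ) ^ (k + 1) / 10 = 10 ^ k := by
    rw [pow_succ, mul_div_cancel_right₀ _ (by norm_num)]
  have hone : 𝐞 ((10 : ℝ) ^ k) = 1 := by exact_mod_cast fourierChar_intCast (10 ^ k)
  rw [h.ft_eq, hdiv, mul_div_right_comm, hdiv, hone]
  norm_num

lemma ft_ten_pow_succ_of_eq_intCast [IsFiniteMeasure μ] (h : muInv t μ) {k : ℕ} {m : ℤ}
    (hm : 10 ^ k * t = m) : ft μ (10 ^ (k + 1)) = ft μ (10 ^ k) := by
  rw [h.ft_ten_pow_succ, hm, fourierChar_intCast]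
  norm_num

lemma ft_ten_pow_eq_of_le [IsFiniteMeasure μ] (h : muInv t μ) {n : ℕ} {m : ℤ}
    (hm : 10 ^ n * t = m) {L : ℕ} (hnL : n ≤ L) : ft μ (10 ^ L) = ft μ (10 ^ n) := by
  induction L, hnL using Nat.le_induction with
  | base => rfl
  | succ k hnk ih =>
    refine (h.ft_ten_pow_succ_of_eq_intCast (m := 10 ^ (k - n) * m) ?_).trans ih
    rw [← pow_sub_mul_pow 10 hnk, mul_assoc, hm]
    push_cast
    ring

lemma norm_ft_ten_pow_div_three_le [IsFiniteMeasure μ] (h : muInv t μ) (k : ℕ) :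
    ‖ft μ (10 ^ k)‖ / 3 ≤ ‖ft μ (10 ^ (k + 1))‖ := by
  have htwo : 1 ≤ ‖(2 : ℂ) + 𝐞 (10 ^ k * t)‖ := by
    have := norm_sub_le_norm_add (2 : ℂ) (𝐞 (10 ^ k * t))
    rw [Circle.norm_coe, Complex.norm_ofNat] at this
    linarith
  calc ‖ft μ (10 ^ k)‖ / 3 ≤ 3⁻¹ * ‖(2 : ℂ) + 𝐞 (10 ^ k * t)‖ * ‖ft μ (10 ^ k)‖ := by
        nlinarith [norm_nonneg (ft μ (10 ^ k))]
    _ = ‖ft μ (10 ^ (k + 1))‖ := by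
      rw [h.ft_ten_pow_succ, norm_mul, norm_mul, norm_inv, Complex.norm_ofNat]

lemma one_div_three_pow_mul_norm_ft_one_le [IsFiniteMeasure μ] (h : muInv t μ) (k : ℕ) :
    (1 / 3) ^ k * ‖ft μ 1‖ ≤ ‖ft μ (10 ^ k)‖ := by
  induction k with
  | zero => simp
  | succ k ih =>
    calc (1 / 3) ^ (k + 1) * ‖ft μ 1‖ = (1 / 3) ^ k * ‖ft μ 1‖ / 3 := by ring
      _ ≤ ‖ft μ (10 ^ k)‖ / 3 := by gcongr
      _ ≤ ‖ft μ (10 ^ (k + 1))‖ := h.norm_ft_ten_pow_div_three_le k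

end muInv

/-- There is `c > 0` such that for every `n`, every `0 ≤ p ≤ 10^n` and every `L > n`,
for `t = p/10^n` we have `|μ̂_t(10^L)| ≥ c (1/3)^n`. -/
theorem stmt14 :
    ∃ c > 0, ∀ (n p L : ℕ), p ≤ 10 ^ n → n < L →
      ∀ μ : Measure ℝ, IsProbabilityMeasure μ → muInv ((p : ℝ) / 10 ^ n) μ →
        c * (1 / 3 : ℝ) ^ n ≤ ‖ft μ ((10 : ℝ) ^ L)‖ := by
  refine ⟨cos (2 * π * (1 / 9)), cos_pos_of_mem_Ioo ⟨by nlinarith [pi_pos], by nlinarith [pi_pos]⟩, ?_⟩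
  intro n p L hp hnL μ _ h
  have ht0 : 0 ≤ (p : ℝ) / 10 ^ n := by positivity
  have ht1 : (p : ℝ) / 10 ^ n ≤ 1 := div_le_one_of_le₀ (by exact_mod_cast hp) (by positivity)
  have hpt : (10 : ℝ) ^ n * (p / 10 ^ n) = (p : ℤ) := by field_simp; norm_cast
  calc cos (2 * π * (1 / 9)) * (1 / 3) ^ n ≤ (1 / 3) ^ n * ‖ft μ 1‖ := by
        rw [mul_comm]
        gcongr
        exact cos_le_norm_ft_one (by norm_num) (h.ae_mem_Icc ht0 ht1)
    _ ≤ ‖ft μ (10 ^ n)‖ := h.one_div_three_pow_mul_norm_ft_one_le n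
    _ = ‖ft μ (10 ^ L)‖ := by rw [h.ft_ten_pow_eq_of_le hpt hnL.le]
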